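/- arXiv:1403.7254 — 3 statements merged into one kernel-verified Lean document; each statement's English description precedes it below -/
import Mathlib

section
/- Let A be an m×m real symmetric positive definite matrix, b ∈ ℝ^m, q(x) = ½xᵀAx − xᵀb, x ∈ ℝ^m, g = Ax − b, and let π₁,…,π_{n̂} be the block projections of a partition of {1,…,m} with π_n(g) ≠ 0 for all n. With D_n = ⟨g, π_n(g)⟩, H_{n,m'} = ⟨π_n(g), A π_{m'}(g)⟩, Θ* = −H⁻¹D, and x⁺ = x + Σ_n θ*_n π_n(g), one has the exact decrease identity q(x) − q(x⁺) = ½ Dᵀ H⁻¹ D. -/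
/-!
Writing `s(θ) = Σₙ θₙ πₙ(g)`, one has `θᵀHφ = s(θ)ᵀ A s(φ)` and `θᵀD = s(θ)ᵀ g`, so `H` is the
Gram matrix of the block gradients for the `A`-inner product. The blocks are nonzero with
disjoint supports, hence linearly independent, so `H` is positive definite and `HΘ* = −D`.
Expanding the quadratic, `q(x) − q(x + s) = −sᵀg − ½ sᵀAs`, which at `s = s(Θ*)` becomes
`−Θ*ᵀD + ½ Θ*ᵀD = ½ DᵀH⁻¹D`.
-/

open Matrix

/-- The quadratic form `q(x) = ½ xᵀAx − xᵀb`. -/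
noncomputable def quadForm {m : ℕ} (A : Matrix (Fin m) (Fin m) ℝ) (b x : Fin m → ℝ) : ℝ :=
  (1 / 2 : ℝ) * (x ⬝ᵥ A.mulVec x) - x ⬝ᵥ b

/-- Block projection associated with the partition of `Fin m` given by the fibers of
`P : Fin m → Fin nh`. -/
def blockProj {m nh : ℕ} (P : Fin m → Fin nh) (k : Fin nh) (x : Fin m → ℝ) : Fin m → ℝ :=
  fun i => if P i = k then x i else 0

theorem Matrix.PosDef.isSymm {n : Type*} {A : Matrix n n ℝ} (hA : A.PosDef) : A.IsSymm :=
  (conjTranspose_eq_transpose_of_trivial A).symm.trans hA.isHermitian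

section Gram

variable {ι κ R : Type*} [Fintype ι] [Fintype κ]

theorem Matrix.IsSymm.dotProduct_mulVec_comm [CommSemiring R] {A : Matrix ι ι R}
    (hA : A.IsSymm) (u v : ι → R) : u ⬝ᵥ A *ᵥ v = v ⬝ᵥ A *ᵥ u := by
  rw [dotProduct_mulVec, ← mulVec_transpose, hA.eq, dotProduct_comm]

def formGram [CommSemiring R] (A : Matrix ι ι R) (v : κ → ι → R) : Matrix κ κ R :=
  of fun k l => v k ⬝ᵥ A *ᵥ v l

theorem dotProduct_formGram_mulVec [CommSemiring R] (A : Matrix ι ι R) (v : κ → ι → R)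
    (θ φ : κ → R) :
    θ ⬝ᵥ formGram A v *ᵥ φ = (∑ k, θ k • v k) ⬝ᵥ A *ᵥ ∑ l, φ l • v l := by
  change ∑ k, θ k * ∑ l, (v k ⬝ᵥ A *ᵥ v l) * φ l = _
  simp only [mulVec_sum, mulVec_smul, sum_dotProduct, dotProduct_sum, smul_dotProduct,
    dotProduct_smul, smul_eq_mul, Finset.mul_sum]
  rw [Finset.sum_comm]
  simp only [mul_comm, mul_left_comm]

theorem posDef_formGram {A : Matrix ι ι ℝ} (hA : A.PosDef) {v : κ → ι → ℝ}
    (hv : LinearIndependent ℝ v) : (formGram A v).PosDef := by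
  refine .of_dotProduct_mulVec_pos ?_ fun θ hθ => ?_
  · exact IsSymm.ext fun k l => hA.isSymm.dotProduct_mulVec_comm _ _
  · have hsum : ∑ k, θ k • v k ≠ 0 := fun h =>
      hθ (funext (Fintype.linearIndependent_iff.mp hv θ h))
    simpa [dotProduct_formGram_mulVec] using hA.dotProduct_mulVec_pos hsum

end Gram

theorem quadForm_add {m : ℕ} {A : Matrix (Fin m) (Fin m) ℝ} (hA : A.IsSymm) (b x s : Fin m → ℝ) :
    quadForm A b (x + s) = quadForm A b x + s ⬝ᵥ (A *ᵥ x - b) + 1 / 2 * (s ⬝ᵥ A *ᵥ s) := by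
  simp only [quadForm, mulVec_add, dotProduct_add, add_dotProduct, dotProduct_sub]
  rw [hA.dotProduct_mulVec_comm x s]
  ring

/-- Exact decrease of `q` along any subspace search direction whose coefficients solve the
Newton system `Gram(v) θ = −D` of the restriction of `q` to `x + span v`. -/
theorem quadForm_sub_quadForm_add_sum_smul {m : ℕ} {κ : Type*} [Fintype κ]
    {A : Matrix (Fin m) (Fin m) ℝ} (hA : A.IsSymm) (b x : Fin m → ℝ) (v : κ → Fin m → ℝ)
    {θ : κ → ℝ} (hθ : formGram A v *ᵥ θ = -fun k => (A *ᵥ x - b) ⬝ᵥ v k) :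
    quadForm A b x - quadForm A b (x + ∑ k, θ k • v k) =
      -(1 / 2) * (θ ⬝ᵥ fun k => (A *ᵥ x - b) ⬝ᵥ v k) := by
  have hslope : (∑ k, θ k • v k) ⬝ᵥ (A *ᵥ x - b) = θ ⬝ᵥ fun k => (A *ᵥ x - b) ⬝ᵥ v k := by
    simp only [sum_dotProduct, smul_dotProduct, smul_eq_mul, dotProduct_comm (v _)]
    rfl
  have hcurv : (∑ k, θ k • v k) ⬝ᵥ A *ᵥ (∑ k, θ k • v k) =
      -(θ ⬝ᵥ fun k => (A *ᵥ x - b) ⬝ᵥ v k) := by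
    rw [← dotProduct_formGram_mulVec, hθ, dotProduct_neg]
  rw [quadForm_add hA, hslope, hcurv]
  ring

theorem sum_smul_blockProj_apply {m nh : ℕ} (P : Fin m → Fin nh) (g : Fin m → ℝ)
    (θ : Fin nh → ℝ) (i : Fin m) : (∑ n, θ n • blockProj P n g) i = θ (P i) * g i := by
  simp [blockProj, Finset.sum_apply]

theorem linearIndependent_blockProj {m nh : ℕ} {P : Fin m → Fin nh} {g : Fin m → ℝ}
    (hg : ∀ n, blockProj P n g ≠ 0) : LinearIndependent ℝ fun n => blockProj P n g := by
  refine Fintype.linearIndependent_iff.mpr fun θ hθ n => ?_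
  obtain ⟨i, hi⟩ := Function.ne_iff.mp (hg n)
  have hPi : P i = n := by
    by_contra h
    simp [blockProj, h] at hi
  have hθi := congrFun hθ i
  rw [sum_smul_blockProj_apply, hPi] at hθi
  simp only [blockProj, hPi, if_true, Pi.zero_apply] at hi
  exact (mul_eq_zero.mp hθi).resolve_right hi

theorem stmt_4_general {m nh : ℕ} (A : Matrix (Fin m) (Fin m) ℝ) (hA : A.PosDef)
    (b x : Fin m → ℝ)
    (P : Fin m → Fin nh)
    (g : Fin m → ℝ) (hg : g = A.mulVec x - b)
    (hnz : ∀ n, blockProj P n g ≠ 0)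
    (D : Fin nh → ℝ) (hD : ∀ n, D n = g ⬝ᵥ blockProj P n g)
    (H : Matrix (Fin nh) (Fin nh) ℝ)
    (hH : ∀ n m', H n m' = blockProj P n g ⬝ᵥ A.mulVec (blockProj P m' g))
    (Θs : Fin nh → ℝ) (hΘs : Θs = -(H⁻¹.mulVec D))
    (xp : Fin m → ℝ) (hxp : xp = x + ∑ n, Θs n • blockProj P n g) :
    quadForm A b x - quadForm A b xp = (1 / 2 : ℝ) * (D ⬝ᵥ H⁻¹.mulVec D) := by
  have hHgram : H = formGram A fun n => blockProj P n g := Matrix.ext hH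
  have hDg : D = fun n => (A *ᵥ x - b) ⬝ᵥ blockProj P n g := funext fun n => hg ▸ hD n
  have hdet : IsUnit H.det := (isUnit_iff_isUnit_det H).mp <| by
    rw [hHgram]
    exact (posDef_formGram hA (linearIndependent_blockProj hnz)).isUnit
  have hNewton : H *ᵥ Θs = -D := by
    rw [hΘs, mulVec_neg, mulVec_mulVec, mul_nonsing_inv H hdet, one_mulVec]
  rw [hHgram, hDg] at hNewton
  rw [hxp, quadForm_sub_quadForm_add_sum_smul hA.isSymm b x _ hNewton, ← hDg, hΘs,
    neg_dotProduct, dotProduct_comm]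
  ring

/-- Exact decrease identity `q(x) − q(x⁺) = ½ Dᵀ H⁻¹ D` for the enhanced steepest-descent
update `x⁺ = x + Σₙ θ*ₙ πₙ(g)` with `Θ* = −H⁻¹ D`. -/
theorem stmt_4 {m nh : ℕ} (A : Matrix (Fin m) (Fin m) ℝ) (hA : A.PosDef)
    (b x : Fin m → ℝ)
    (P : Fin m → Fin nh) (hP : Function.Surjective P)
    (g : Fin m → ℝ) (hg : g = A.mulVec x - b)
    (hnz : ∀ n, blockProj P n g ≠ 0)
    (D : Fin nh → ℝ) (hD : ∀ n, D n = g ⬝ᵥ blockProj P n g)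
    (H : Matrix (Fin nh) (Fin nh) ℝ)
    (hH : ∀ n m', H n m' = blockProj P n g ⬝ᵥ A.mulVec (blockProj P m' g))
    (Θs : Fin nh → ℝ) (hΘs : Θs = -(H⁻¹.mulVec D))
    (xp : Fin m → ℝ) (hxp : xp = x + ∑ n, Θs n • blockProj P n g) :
    quadForm A b x - quadForm A b xp = (1 / 2 : ℝ) * (D ⬝ᵥ H⁻¹.mulVec D) :=
  stmt_4_general A hA b x P g hg hnz D hD H hH Θs hΘs xp hxp
end

section
/- Let A be an m×m real symmetric positive definite matrix, b ∈ ℝ^m, q(x) = ½xᵀAx − xᵀb, x ∈ ℝ^m, g = Ax − b, and let π₁,…,π_{n̂} be the block projections of a partition of {1,…,m} with π_n(g) ≠ 0 for all n. With D_n = ⟨g, π_n(g)⟩ and H_{n,m'} = ⟨π_n(g), A π_{m'}(g)⟩ (so H is symmetric positive definite), one has Dᵀ H⁻¹ D ≥ ‖g‖₂⁴ / (κ(H) · ⟨g, Ag⟩), where κ(H) = λ_max(H)/λ_min(H) is the spectral condition number of H. -/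
/-!
The Gram matrix `H` factors as `Bᵀ A B`, where the columns of `B` are the block projections
`π_n(g)`; these have disjoint nonempty supports, so `B` is injective and `H` is positive definite.
Moreover `B 𝟙 = g` and `D = Bᵀ g`, hence `⟨𝟙, D⟩ = ‖g‖²` and `⟨𝟙, H 𝟙⟩ = ⟨g, A g⟩`.
Cauchy–Schwarz in the inner product defined by `H` gives `⟨𝟙, D⟩² ≤ ⟨𝟙, H 𝟙⟩ · Dᵀ H⁻¹ D`, i.e.
`Dᵀ H⁻¹ D ≥ ‖g‖⁴ / ⟨g, A g⟩`, which is even stronger than the claim because `κ(H) ≥ 1`.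
-/

open Matrix

/-- Spectral condition number `κ(M) = λ_max(M) / λ_min(M)` of a symmetric real matrix
(junk value `0` if `M` is not symmetric). -/
noncomputable def condNumber {n : ℕ} (M : Matrix (Fin n) (Fin n) ℝ) : ℝ :=
  letI := Classical.propDecidable M.IsHermitian
  if h : M.IsHermitian then (⨆ i, h.eigenvalues i) / (⨅ i, h.eigenvalues i) else 0

section CauchySchwarz

variable {ι : Type*} [Fintype ι] {H : Matrix ι ι ℝ}

lemma Matrix.PosSemidef.dotProduct_mulVec_sq_le (hH : H.PosSemidef) (u v : ι → ℝ) :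
    (u ⬝ᵥ H *ᵥ v) ^ 2 ≤ (u ⬝ᵥ H *ᵥ u) * (v ⬝ᵥ H *ᵥ v) := by
  let := H.toSeminormedAddCommGroup hH
  let := H.toInnerProductSpace hH
  have h := real_inner_mul_inner_self_le u v
  change (H *ᵥ v) ⬝ᵥ star u * ((H *ᵥ v) ⬝ᵥ star u)
    ≤ ((H *ᵥ u) ⬝ᵥ star u) * ((H *ᵥ v) ⬝ᵥ star v) at h
  simpa only [star_trivial, dotProduct_comm (H *ᵥ _), sq] using h

lemma Matrix.PosDef.sq_dotProduct_le_mul_dotProduct_inv_mulVec [DecidableEq ι]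
    (hH : H.PosDef) (u d : ι → ℝ) :
    (u ⬝ᵥ d) ^ 2 ≤ (u ⬝ᵥ H *ᵥ u) * (d ⬝ᵥ H⁻¹ *ᵥ d) := by
  set w := H⁻¹ *ᵥ d
  have hHw : H *ᵥ w = d := by
    rw [mulVec_mulVec, mul_nonsing_inv _ ((isUnit_iff_isUnit_det H).1 hH.isUnit), one_mulVec]
  have hCS := hH.posSemidef.dotProduct_mulVec_sq_le u w
  rwa [hHw, dotProduct_comm w] at hCS

end CauchySchwarz

lemma Matrix.transpose_mul_mul_apply {κ ι : Type*} [Fintype κ] (A : Matrix κ κ ℝ)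
    (B : Matrix κ ι ℝ) (i j : ι) : (Bᵀ * A * B) i j = Bᵀ i ⬝ᵥ A *ᵥ Bᵀ j := by
  rw [Matrix.mul_assoc, mul_apply']
  rfl

lemma Matrix.one_le_condNumber {n : ℕ} [Nonempty (Fin n)] {H : Matrix (Fin n) (Fin n) ℝ}
    (hH : H.PosDef) : 1 ≤ condNumber H := by
  rw [condNumber, dif_pos hH.isHermitian]
  obtain ⟨i, hi⟩ := exists_eq_ciInf_of_finite (f := hH.isHermitian.eigenvalues)
  refine (one_le_div ?_).2 (ciInf_le_ciSup (Finite.bddBelow_range _) (Finite.bddAbove_range _))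
  exact hi ▸ hH.eigenvalues_pos i

section BlockMatrix

variable {m nh : ℕ} (P : Fin m → Fin nh) (g : Fin m → ℝ)

def blockMatrix : Matrix (Fin m) (Fin nh) ℝ :=
  of fun i n => blockProj P n g i

lemma blockMatrix_mulVec (v : Fin nh → ℝ) : blockMatrix P g *ᵥ v = fun i => g i * v (P i) := by
  funext i
  simp [mulVec, dotProduct, blockMatrix, blockProj, ite_mul]

lemma blockMatrix_mulVec_one : blockMatrix P g *ᵥ 1 = g := by
  simp [blockMatrix_mulVec]

lemma blockMatrix_transpose_mulVec_apply (y : Fin m → ℝ) (n : Fin nh) :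
    ((blockMatrix P g)ᵀ *ᵥ y) n = y ⬝ᵥ blockProj P n g :=
  dotProduct_comm _ _

lemma blockMatrix_transpose_mul_mul_apply (A : Matrix (Fin m) (Fin m) ℝ) (n k : Fin nh) :
    ((blockMatrix P g)ᵀ * A * blockMatrix P g) n k = blockProj P n g ⬝ᵥ A *ᵥ blockProj P k g :=
  transpose_mul_mul_apply A _ n k

lemma blockMatrix_mulVec_injective (hnz : ∀ n, blockProj P n g ≠ 0) :
    Function.Injective (blockMatrix P g).mulVec := by
  intro v w hvw
  funext n
  obtain ⟨i, hi⟩ := Function.ne_iff.mp (hnz n)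
  have hPi : P i = n := by by_contra h; simp [blockProj, h] at hi
  have hgi : g i ≠ 0 := by simpa [blockProj, hPi] using hi
  have := congrFun hvw i
  simp only [blockMatrix_mulVec, hPi] at this
  exact mul_left_cancel₀ hgi this

end BlockMatrix

theorem stmt_5_general {m nh : ℕ} (A : Matrix (Fin m) (Fin m) ℝ) (hA : A.PosDef)
    (P : Fin m → Fin nh)
    (g : Fin m → ℝ)
    (hnz : ∀ n, blockProj P n g ≠ 0)
    (D : Fin nh → ℝ) (hD : ∀ n, D n = g ⬝ᵥ blockProj P n g)
    (H : Matrix (Fin nh) (Fin nh) ℝ)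
    (hH : ∀ n m', H n m' = blockProj P n g ⬝ᵥ A.mulVec (blockProj P m' g)) :
    D ⬝ᵥ H⁻¹.mulVec D ≥ (g ⬝ᵥ g) ^ 2 / (condNumber H * (g ⬝ᵥ A.mulVec g)) := by
  rcases isEmpty_or_nonempty (Fin nh) with hnh | hnh
  · have := P.isEmpty
    simp [dotProduct]
  set B := blockMatrix P g
  have hHB : H = Bᵀ * A * B := by
    ext n k
    rw [hH, blockMatrix_transpose_mul_mul_apply]
  have hDB : D = Bᵀ *ᵥ g := by
    funext n
    rw [hD, blockMatrix_transpose_mulVec_apply]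
  have hHpd : H.PosDef := by
    simpa [hHB] using hA.conjTranspose_mul_mul_same (blockMatrix_mulVec_injective P g hnz)
  have hgAg : 0 < g ⬝ᵥ A *ᵥ g := by
    have hg : g ≠ 0 := fun h => hnz hnh.some (by funext i; simp [h, blockProj])
    simpa using hA.dotProduct_mulVec_pos hg
  have h1D : 1 ⬝ᵥ D = g ⬝ᵥ g := by
    rw [hDB, dotProduct_mulVec, vecMul_transpose, blockMatrix_mulVec_one]
  have h1H1 : 1 ⬝ᵥ H *ᵥ 1 = g ⬝ᵥ A *ᵥ g := by
    rw [hHB, ← mulVec_mulVec, ← mulVec_mulVec, dotProduct_mulVec, vecMul_transpose,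
      blockMatrix_mulVec_one]
  have hCS := hHpd.sq_dotProduct_le_mul_dotProduct_inv_mulVec 1 D
  rw [h1D, h1H1] at hCS
  calc (g ⬝ᵥ g) ^ 2 / (condNumber H * (g ⬝ᵥ A *ᵥ g))
      ≤ (g ⬝ᵥ g) ^ 2 / (g ⬝ᵥ A *ᵥ g) :=
        div_le_div_of_nonneg_left (sq_nonneg _) hgAg
          (le_mul_of_one_le_left hgAg.le (one_le_condNumber hHpd))
    _ ≤ D ⬝ᵥ H⁻¹ *ᵥ D := (div_le_iff₀' hgAg).2 hCS

/-- Lower bound `Dᵀ H⁻¹ D ≥ ‖g‖₂⁴ / (κ(H) ⟨g, A g⟩)` for the Jacobian vector `D` and the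
Gram–Hessian matrix `H` of the blockwise line-search. -/
theorem stmt_5 {m nh : ℕ} (A : Matrix (Fin m) (Fin m) ℝ) (hA : A.PosDef)
    (b x : Fin m → ℝ)
    (P : Fin m → Fin nh) (hP : Function.Surjective P)
    (g : Fin m → ℝ) (hg : g = A.mulVec x - b)
    (hnz : ∀ n, blockProj P n g ≠ 0)
    (D : Fin nh → ℝ) (hD : ∀ n, D n = g ⬝ᵥ blockProj P n g)
    (H : Matrix (Fin nh) (Fin nh) ℝ)
    (hH : ∀ n m', H n m' = blockProj P n g ⬝ᵥ A.mulVec (blockProj P m' g)) :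
    D ⬝ᵥ H⁻¹.mulVec D ≥ (g ⬝ᵥ g) ^ 2 / (condNumber H * (g ⬝ᵥ A.mulVec g)) :=
  stmt_5_general A hA P g hnz D hD H hH
end

section
/- Let A be an m×m real symmetric positive definite matrix with condition number κ̲ = λ_max(A)/λ_min(A), b ∈ ℝ^m, q(x) = ½xᵀAx − xᵀb with minimizer x* = A⁻¹b, and fix a partition of {1,…,m} with block projections π₁,…,π_{n̂}. Suppose (x^k)_{k≥0} is a sequence in ℝ^m such that for every k, the gradient blocks π_n(Ax^k − b) are all nonzero, and x^{k+1} = x^k + Σ_n θ^k_n π_n(Ax^k − b) where Θ^k = −H_k⁻¹D_k, with (D_k)_n = ⟨Ax^k − b, π_n(Ax^k − b)⟩ and (H_k)_{n,m'} = ⟨π_n(Ax^k − b), A π_{m'}(Ax^k − b)⟩. If there is K ≥ 1 with κ(H_k) ≤ K for all k, then ‖x^k − x*‖²_A ≤ (1 − 4κ̲/(K(κ̲+1)²))^k · ‖x^0 − x*‖²_A for all k, and consequently x^k converges to x*. -/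
open Matrix

/-!
The block step minimises the energy error `‖x − x*‖²_A` over the affine space
`x^k + span {π_n(g^k)}`: `Θ^k` solves the normal equations `H_k Θ = −D_k`, and `H_k` is
invertible because the blocks are nonzero and have disjoint supports. Since `Σ_n π_n(g) = g`,
this space contains the steepest-descent step `x^k − α g^k` with exact line search, whose energy
error is `‖e‖²_A − (gᵀg)² / gᵀAg`. The Kantorovich inequality bounds it by
`(1 − 4κ̲/(κ̲+1)²) ‖e‖²_A`, and this factor is at most the claimed one because `K ≥ 1`.
Convergence follows because `‖y‖²_A ≥ λ_min(A) ‖y‖²`.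
-/

theorem sum_mul_sum_inv_mul_le {ι : Type*} [Fintype ι] {a b : ℝ} (ha : 0 < a) {lam w : ι → ℝ}
    (hlo : ∀ i, a ≤ lam i) (hhi : ∀ i, lam i ≤ b) (hw : ∀ i, 0 ≤ w i) :
    4 * a * b * ((∑ i, lam i * w i) * ∑ i, (lam i)⁻¹ * w i) ≤ (a + b) ^ 2 * (∑ i, w i) ^ 2 := by
  -- `(λ - a)(b - λ) ≥ 0` gives `λ + ab/λ ≤ a + b`; then AM-GM on `X = Σ λw`, `Y = ab Σ w/λ`.
  have hterm : ∀ i, 0 ≤ lam i * w i + a * b * ((lam i)⁻¹ * w i) ∧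
      lam i * w i + a * b * ((lam i)⁻¹ * w i) ≤ (a + b) * w i := by
    intro i
    have hl : 0 < lam i := ha.trans_le (hlo i)
    have hb : 0 < b := hl.trans_le (hhi i)
    have hgap : (a + b) * w i - (lam i * w i + a * b * ((lam i)⁻¹ * w i))
        = (lam i)⁻¹ * w i * ((lam i - a) * (b - lam i)) := by
      field_simp; ring
    constructor
    · have := hw i; positivity
    · have := mul_nonneg (mul_nonneg (inv_nonneg.2 hl.le) (hw i))
        (mul_nonneg (sub_nonneg.2 (hlo i)) (sub_nonneg.2 (hhi i)))
      linarith
  set X := ∑ i, lam i * w i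
  set Y := a * b * ∑ i, (lam i)⁻¹ * w i
  have hsum : X + Y = ∑ i, (lam i * w i + a * b * ((lam i)⁻¹ * w i)) := by
    rw [Finset.sum_add_distrib, ← Finset.mul_sum]
  have h0 : 0 ≤ X + Y := hsum ▸ Finset.sum_nonneg fun i _ => (hterm i).1
  have h1 : X + Y ≤ (a + b) * ∑ i, w i := by
    rw [hsum, Finset.mul_sum]
    exact Finset.sum_le_sum fun i _ => (hterm i).2
  calc 4 * a * b * (X * ∑ i, (lam i)⁻¹ * w i) = 4 * X * Y := by ring
    _ ≤ (X + Y) ^ 2 := by nlinarith [sq_nonneg (X - Y)]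
    _ ≤ ((a + b) * ∑ i, w i) ^ 2 := pow_le_pow_left₀ h0 h1 2
    _ = (a + b) ^ 2 * (∑ i, w i) ^ 2 := by ring

namespace Matrix

section Spectral

variable {n : Type*} [Fintype n]

theorem dotProduct_conj_diagonal_mulVec [DecidableEq n] (U : Matrix n n ℝ) (d y : n → ℝ) :
    y ⬝ᵥ (U * diagonal d * Uᵀ) *ᵥ y = ∑ i, d i * (Uᵀ *ᵥ y) i ^ 2 := by
  rw [← mulVec_mulVec, ← mulVec_mulVec, dotProduct_mulVec, ← mulVec_transpose]
  simp only [dotProduct, mulVec_diagonal]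
  exact Finset.sum_congr rfl fun i _ => by ring

theorem IsSymm.dotProduct_mulVec_comm_s9 {A : Matrix n n ℝ} (hA : A.IsSymm) (v w : n → ℝ) :
    v ⬝ᵥ A *ᵥ w = w ⬝ᵥ A *ᵥ v := by
  rw [dotProduct_mulVec, ← mulVec_transpose, hA.eq, dotProduct_comm]

theorem norm_le_sqrt_dotProduct_self (y : n → ℝ) : ‖y‖ ≤ √(y ⬝ᵥ y) :=
  (pi_norm_le_iff_of_nonneg (Real.sqrt_nonneg _)).2 fun i => by
    rw [Real.norm_eq_abs]
    exact Real.abs_le_sqrt <| by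
      simpa [dotProduct, sq] using
        Finset.single_le_sum (fun j _ => mul_self_nonneg (y j)) (Finset.mem_univ i)

variable [DecidableEq n] {A : Matrix n n ℝ}

theorem IsHermitian.eq_conj_diagonal_eigenvalues (hA : A.IsHermitian) :
    A = (hA.eigenvectorUnitary : Matrix n n ℝ) * diagonal hA.eigenvalues *
      (hA.eigenvectorUnitary : Matrix n n ℝ)ᵀ := by
  conv_lhs => rw [hA.spectral_theorem]
  simp [star_eq_conjTranspose]

theorem PosDef.inv_eq_conj_diagonal_eigenvalues (hA : A.PosDef) :
    A⁻¹ = (hA.1.eigenvectorUnitary : Matrix n n ℝ) * diagonal hA.1.eigenvalues⁻¹ *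
      (hA.1.eigenvectorUnitary : Matrix n n ℝ)ᵀ := by
  set U : Matrix n n ℝ := (hA.1.eigenvectorUnitary : Matrix n n ℝ)
  have hUU : Uᵀ * U = 1 := by
    simpa [star_eq_conjTranspose] using Unitary.coe_star_mul_self hA.1.eigenvectorUnitary
  have hUU' : U * Uᵀ = 1 := by
    simpa [star_eq_conjTranspose] using Unitary.coe_mul_star_self hA.1.eigenvectorUnitary
  have hdiag : diagonal hA.1.eigenvalues * diagonal hA.1.eigenvalues⁻¹ = 1 := by
    rw [diagonal_mul_diagonal, ← diagonal_one]
    exact congrArg diagonal (funext fun i => mul_inv_cancel₀ (hA.eigenvalues_pos i).ne')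
  apply inv_eq_right_inv
  calc A * (U * diagonal hA.1.eigenvalues⁻¹ * Uᵀ)
      = U * diagonal hA.1.eigenvalues * Uᵀ * (U * diagonal hA.1.eigenvalues⁻¹ * Uᵀ) :=
        congrArg (· * _) hA.1.eq_conj_diagonal_eigenvalues
    _ = U * diagonal hA.1.eigenvalues * (Uᵀ * U) * diagonal hA.1.eigenvalues⁻¹ * Uᵀ := by
        simp only [Matrix.mul_assoc]
    _ = 1 := by rw [hUU, Matrix.mul_one, Matrix.mul_assoc U, hdiag, Matrix.mul_one, hUU']

theorem PosDef.exists_eigenbasis_coords (hA : A.PosDef) (y : n → ℝ) :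
    ∃ c : n → ℝ, y ⬝ᵥ y = ∑ i, c i ^ 2 ∧
      y ⬝ᵥ A *ᵥ y = ∑ i, hA.1.eigenvalues i * c i ^ 2 ∧
      y ⬝ᵥ A⁻¹ *ᵥ y = ∑ i, (hA.1.eigenvalues i)⁻¹ * c i ^ 2 := by
  set U : Matrix n n ℝ := (hA.1.eigenvectorUnitary : Matrix n n ℝ)
  have hUU' : U * Uᵀ = 1 := by
    simpa [star_eq_conjTranspose] using Unitary.coe_mul_star_self hA.1.eigenvectorUnitary
  refine ⟨Uᵀ *ᵥ y, ?_, ?_, ?_⟩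
  · simpa [hUU'] using dotProduct_conj_diagonal_mulVec U 1 y
  · conv_lhs => rw [hA.1.eq_conj_diagonal_eigenvalues]
    exact dotProduct_conj_diagonal_mulVec U _ y
  · rw [hA.inv_eq_conj_diagonal_eigenvalues]
    exact dotProduct_conj_diagonal_mulVec U _ y

theorem PosDef.iInf_eigenvalues_pos [Nonempty n] (hA : A.PosDef) :
    0 < ⨅ i, hA.1.eigenvalues i := by
  obtain ⟨i, hi⟩ := exists_eq_ciInf_of_finite (f := hA.1.eigenvalues)
  exact (hA.eigenvalues_pos i).trans_eq hi

theorem PosDef.kantorovich (hA : A.PosDef) {a b : ℝ} (ha : 0 < a)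
    (hlo : ∀ i, a ≤ hA.1.eigenvalues i) (hhi : ∀ i, hA.1.eigenvalues i ≤ b) (y : n → ℝ) :
    4 * a * b * ((y ⬝ᵥ A *ᵥ y) * (y ⬝ᵥ A⁻¹ *ᵥ y)) ≤ (a + b) ^ 2 * (y ⬝ᵥ y) ^ 2 := by
  obtain ⟨c, h0, h1, h2⟩ := hA.exists_eigenbasis_coords y
  rw [h0, h1, h2]
  exact sum_mul_sum_inv_mul_le ha hlo hhi fun i => sq_nonneg (c i)

theorem PosDef.mul_dotProduct_le (hA : A.PosDef) {a : ℝ} (hlo : ∀ i, a ≤ hA.1.eigenvalues i)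
    (y : n → ℝ) : a * (y ⬝ᵥ y) ≤ y ⬝ᵥ A *ᵥ y := by
  obtain ⟨c, h0, h1, -⟩ := hA.exists_eigenbasis_coords y
  rw [h0, h1, Finset.mul_sum]
  exact Finset.sum_le_sum fun i _ => mul_le_mul_of_nonneg_right (hlo i) (sq_nonneg _)

theorem PosDef.tendsto_zero_of_le_geometric [Nonempty n] (hA : A.PosDef) {ρ C : ℝ}
    (hρ₀ : 0 ≤ ρ) (hρ₁ : ρ < 1) {y : ℕ → n → ℝ} (hy : ∀ k, y k ⬝ᵥ A *ᵥ y k ≤ ρ ^ k * C) :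
    Filter.Tendsto y Filter.atTop (nhds 0) := by
  set a := ⨅ i, hA.1.eigenvalues i
  have ha : 0 < a := hA.iInf_eigenvalues_pos
  have hbound : ∀ k, ‖y k‖ ≤ √(ρ ^ k * C / a) := fun k =>
    (norm_le_sqrt_dotProduct_self _).trans <| Real.sqrt_le_sqrt <| by
      rw [le_div_iff₀ ha, mul_comm]
      exact (hA.mul_dotProduct_le (fun i => ciInf_le (Finite.bddBelow_range _) i) _).trans (hy k)
  have hlim : Filter.Tendsto (fun k => √(ρ ^ k * C / a)) Filter.atTop (nhds 0) := by
    simpa using (((tendsto_pow_atTop_nhds_zero_of_lt_one hρ₀ hρ₁).mul_const C).div_const a).sqrt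
  exact squeeze_zero_norm hbound hlim

end Spectral

section CondNumber

variable {m : ℕ} {A : Matrix (Fin m) (Fin m) ℝ}

theorem IsHermitian.condNumber_eq (hA : A.IsHermitian) :
    condNumber A = (⨆ i, hA.eigenvalues i) / ⨅ i, hA.eigenvalues i := by
  rw [condNumber, dif_pos hA]

theorem PosDef.condNumber_nonneg (hA : A.PosDef) : 0 ≤ condNumber A := by
  rw [hA.1.condNumber_eq]
  exact div_nonneg (Real.iSup_nonneg fun i => (hA.eigenvalues_pos i).le)
    (Real.iInf_nonneg fun i => (hA.eigenvalues_pos i).le)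

theorem PosDef.condNumber_pos [Nonempty (Fin m)] (hA : A.PosDef) : 0 < condNumber A := by
  rw [hA.1.condNumber_eq]
  exact div_pos ((hA.eigenvalues_pos (Classical.arbitrary _)).trans_le
    (le_ciSup (Finite.bddAbove_range _) _)) hA.iInf_eigenvalues_pos

theorem PosDef.kantorovich_condNumber [Nonempty (Fin m)] (hA : A.PosDef) (y : Fin m → ℝ) :
    4 * condNumber A / (condNumber A + 1) ^ 2 * ((y ⬝ᵥ A *ᵥ y) * (y ⬝ᵥ A⁻¹ *ᵥ y))
      ≤ (y ⬝ᵥ y) ^ 2 := by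
  set a := ⨅ i, hA.1.eigenvalues i
  set b := ⨆ i, hA.1.eigenvalues i
  have ha : 0 < a := hA.iInf_eigenvalues_pos
  have hlo : ∀ i, a ≤ hA.1.eigenvalues i := ciInf_le (Finite.bddBelow_range _)
  have hhi : ∀ i, hA.1.eigenvalues i ≤ b := le_ciSup (Finite.bddAbove_range _)
  have hb : 0 < b := ha.trans_le ((hlo (Classical.arbitrary _)).trans (hhi _))
  have hfactor : 4 * condNumber A / (condNumber A + 1) ^ 2 = 4 * a * b / (a + b) ^ 2 := by
    rw [show condNumber A = b / a from hA.1.condNumber_eq]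
    field_simp
    ring
  rw [hfactor, div_mul_eq_mul_div, div_le_iff₀ (by positivity), mul_comm _ ((a + b) ^ 2)]
  exact hA.kantorovich ha hlo hhi y

theorem PosDef.exists_steepestDescent_le (hA : A.PosDef) (e : Fin m → ℝ) :
    ∃ α : ℝ, (e - α • A *ᵥ e) ⬝ᵥ A *ᵥ (e - α • A *ᵥ e)
      ≤ (1 - 4 * condNumber A / (condNumber A + 1) ^ 2) * (e ⬝ᵥ A *ᵥ e) := by
  rcases eq_or_ne e 0 with rfl | he
  · exact ⟨0, by simp⟩
  have : Nonempty (Fin m) := let ⟨i, _⟩ := Function.ne_iff.mp he; ⟨i⟩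
  set g := A *ᵥ e
  have hg : g ≠ 0 := (mulVec_injective_of_isUnit hA.isUnit).ne_iff' (mulVec_zero A) |>.2 he
  have hT : 0 < g ⬝ᵥ A *ᵥ g := by simpa using hA.dotProduct_mulVec_pos hg
  have hF : e ⬝ᵥ A *ᵥ e = g ⬝ᵥ A⁻¹ *ᵥ g := by
    rw [mulVec_mulVec, nonsing_inv_mul _ (isUnit_iff_isUnit_det _ |>.1 hA.isUnit), one_mulVec,
      dotProduct_comm]
  have hexpand : ∀ α : ℝ, (e - α • g) ⬝ᵥ A *ᵥ (e - α • g)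
      = e ⬝ᵥ A *ᵥ e - 2 * α * (g ⬝ᵥ g) + α ^ 2 * (g ⬝ᵥ A *ᵥ g) := by
    intro α
    simp only [mulVec_sub, mulVec_smul, sub_dotProduct, dotProduct_sub, smul_dotProduct,
      dotProduct_smul, smul_eq_mul]
    rw [(isHermitian_iff_isSymm.1 hA.1).dotProduct_mulVec_comm_s9 e g]
    ring
  refine ⟨(g ⬝ᵥ g) / (g ⬝ᵥ A *ᵥ g), ?_⟩
  have hK := hA.kantorovich_condNumber g
  rw [← hF] at hK
  set c := 4 * condNumber A / (condNumber A + 1) ^ 2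
  have hgain : c * (e ⬝ᵥ A *ᵥ e) ≤ (g ⬝ᵥ g) ^ 2 / (g ⬝ᵥ A *ᵥ g) := by
    rw [le_div_iff₀ hT]; linarith
  have hval : e ⬝ᵥ A *ᵥ e - 2 * ((g ⬝ᵥ g) / (g ⬝ᵥ A *ᵥ g)) * (g ⬝ᵥ g)
      + ((g ⬝ᵥ g) / (g ⬝ᵥ A *ᵥ g)) ^ 2 * (g ⬝ᵥ A *ᵥ g)
      = e ⬝ᵥ A *ᵥ e - (g ⬝ᵥ g) ^ 2 / (g ⬝ᵥ A *ᵥ g) := by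
    field_simp; ring
  rw [hexpand, hval]
  linarith

end CondNumber

section Galerkin

variable {ι κ : Type*} [Fintype ι] [Fintype κ] {A : Matrix ι ι ℝ}

theorem transpose_mulVec_dotProduct (V : Matrix ι κ ℝ) (w : ι → ℝ) (θ : κ → ℝ) :
    (Vᵀ *ᵥ w) ⬝ᵥ θ = w ⬝ᵥ V *ᵥ θ := by
  rw [mulVec_transpose, dotProduct_mulVec]

theorem PosSemidef.dotProduct_mulVec_le_of_normal_eq (hA : A.PosSemidef) (V : Matrix ι κ ℝ)
    (e : ι → ℝ) {Θ : κ → ℝ} (hΘ : (Vᵀ * A * V) *ᵥ Θ = -(Vᵀ *ᵥ A *ᵥ e)) (θ : κ → ℝ) :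
    (e + V *ᵥ Θ) ⬝ᵥ A *ᵥ (e + V *ᵥ Θ) ≤ (e + V *ᵥ θ) ⬝ᵥ A *ᵥ (e + V *ᵥ θ) := by
  obtain ⟨r, hr_def⟩ : ∃ r, r = e + V *ᵥ Θ := ⟨_, rfl⟩
  have hsymm := (isHermitian_iff_isSymm.1 hA.1).dotProduct_mulVec_comm_s9
  have hr : Vᵀ *ᵥ A *ᵥ r = 0 := by
    have hH : Vᵀ *ᵥ A *ᵥ V *ᵥ Θ = (Vᵀ * A * V) *ᵥ Θ := by
      simp only [mulVec_mulVec, Matrix.mul_assoc]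
    rw [hr_def, mulVec_add, mulVec_add, hH, hΘ, add_neg_cancel]
  have hθ : e + V *ᵥ θ = r + V *ᵥ (θ - Θ) := by
    rw [hr_def, mulVec_sub]; abel
  have hcross : r ⬝ᵥ A *ᵥ V *ᵥ (θ - Θ) = 0 := by
    rw [hsymm, dotProduct_comm, ← transpose_mulVec_dotProduct, hr, zero_dotProduct]
  have hnonneg : 0 ≤ V *ᵥ (θ - Θ) ⬝ᵥ A *ᵥ V *ᵥ (θ - Θ) := by
    simpa using hA.dotProduct_mulVec_nonneg (V *ᵥ (θ - Θ))
  rw [← hr_def, hθ, mulVec_add, dotProduct_add, add_dotProduct, add_dotProduct,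
    hsymm (V *ᵥ _) r, hcross]
  linarith

theorem PosDef.transpose_mul_mul_same (hA : A.PosDef) {V : Matrix ι κ ℝ}
    (hV : Function.Injective V.mulVec) : (Vᵀ * A * V).PosDef := by
  simpa [conjTranspose_eq_transpose_of_trivial] using hA.conjTranspose_mul_mul_same hV

theorem PosDef.dotProduct_mulVec_le_of_normal_eq_of_mem_range {m : ℕ}
    {A : Matrix (Fin m) (Fin m) ℝ} (hA : A.PosDef) {V : Matrix (Fin m) κ ℝ} {e : Fin m → ℝ}
    (hg : A *ᵥ e ∈ Set.range V.mulVec) {Θ : κ → ℝ}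
    (hΘ : (Vᵀ * A * V) *ᵥ Θ = -(Vᵀ *ᵥ A *ᵥ e)) :
    (e + V *ᵥ Θ) ⬝ᵥ A *ᵥ (e + V *ᵥ Θ)
      ≤ (1 - 4 * condNumber A / (condNumber A + 1) ^ 2) * (e ⬝ᵥ A *ᵥ e) := by
  obtain ⟨θ, hθ⟩ := hg
  obtain ⟨α, hα⟩ := hA.exists_steepestDescent_le e
  calc (e + V *ᵥ Θ) ⬝ᵥ A *ᵥ (e + V *ᵥ Θ)
      ≤ (e + V *ᵥ (-α • θ)) ⬝ᵥ A *ᵥ (e + V *ᵥ (-α • θ)) :=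
        hA.posSemidef.dotProduct_mulVec_le_of_normal_eq V e hΘ _
    _ = (e - α • A *ᵥ e) ⬝ᵥ A *ᵥ (e - α • A *ᵥ e) := by
        rw [mulVec_smul, hθ, neg_smul, ← sub_eq_add_neg]
    _ ≤ _ := hα

end Galerkin

end Matrix

section BlockProj

variable {m nh : ℕ} (P : Fin m → Fin nh) (v : Fin m → ℝ)

/-- Its `n`-th column is `π_n v`, so `Σ_n θ_n π_n(g) = V θ`, `D = Vᵀ g` and `H = Vᵀ A V`
for `V = blockProjMatrix P g`. -/
def blockProjMatrix : Matrix (Fin m) (Fin nh) ℝ :=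
  Matrix.of fun i n => blockProj P n v i

theorem blockProjMatrix_mulVec (θ : Fin nh → ℝ) :
    blockProjMatrix P v *ᵥ θ = ∑ n, θ n • blockProj P n v := by
  ext i
  simp [blockProjMatrix, mulVec, dotProduct, Finset.sum_apply, mul_comm]

theorem blockProjMatrix_mulVec_apply (θ : Fin nh → ℝ) (i : Fin m) :
    (blockProjMatrix P v *ᵥ θ) i = θ (P i) * v i := by
  simp [blockProjMatrix, blockProj, mulVec, dotProduct, mul_comm]

theorem blockProjMatrix_mulVec_one : blockProjMatrix P v *ᵥ 1 = v :=
  funext fun i => by simp [blockProjMatrix_mulVec_apply]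

theorem blockProjMatrix_transpose_mulVec (w : Fin m → ℝ) :
    (blockProjMatrix P v)ᵀ *ᵥ w = fun n => w ⬝ᵥ blockProj P n v := by
  ext n
  simp [blockProjMatrix, mulVec, dotProduct, mul_comm]

theorem blockProjMatrix_transpose_mul_mul (A : Matrix (Fin m) (Fin m) ℝ) :
    (blockProjMatrix P v)ᵀ * A * blockProjMatrix P v
      = of fun n n' => blockProj P n v ⬝ᵥ A *ᵥ blockProj P n' v := by
  ext n n'
  simp only [Matrix.mul_apply, transpose_apply, blockProjMatrix, of_apply, mulVec, dotProduct,
    Finset.mul_sum, Finset.sum_mul, mul_assoc]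
  exact Finset.sum_comm

theorem blockProjMatrix_mulVec_injective (h : ∀ n, blockProj P n v ≠ 0) :
    Function.Injective (blockProjMatrix P v).mulVec := by
  intro θ θ' hθ
  funext n
  obtain ⟨i, hi⟩ := Function.ne_iff.mp (h n)
  have hPi : P i = n := by
    by_contra hne
    simp [blockProj, hne] at hi
  have hvi : v i ≠ 0 := by simpa [blockProj, hPi] using hi
  have := congrFun hθ i
  rw [blockProjMatrix_mulVec_apply, blockProjMatrix_mulVec_apply, hPi] at this
  exact mul_right_cancel₀ hvi this

end BlockProj

theorem blockSteepestDescent_energy_le {m nh : ℕ} {A : Matrix (Fin m) (Fin m) ℝ}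
    (hA : A.PosDef) (P : Fin m → Fin nh) {e g : Fin m → ℝ} (hg : A *ᵥ e = g)
    (hnz : ∀ n, blockProj P n g ≠ 0)
    {D : Fin nh → ℝ} (hD : ∀ n, D n = g ⬝ᵥ blockProj P n g) {H : Matrix (Fin nh) (Fin nh) ℝ}
    (hH : ∀ n n', H n n' = blockProj P n g ⬝ᵥ A *ᵥ blockProj P n' g)
    {Θ : Fin nh → ℝ} (hΘ : Θ = -(H⁻¹ *ᵥ D)) :
    (e + ∑ n, Θ n • blockProj P n g) ⬝ᵥ A *ᵥ (e + ∑ n, Θ n • blockProj P n g)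
      ≤ (1 - 4 * condNumber A / (condNumber A + 1) ^ 2) * (e ⬝ᵥ A *ᵥ e) := by
  set V := blockProjMatrix P g
  have hHV : H = Vᵀ * A * V := by
    rw [blockProjMatrix_transpose_mul_mul]
    exact Matrix.ext hH
  have hDV : D = Vᵀ *ᵥ A *ᵥ e := by
    rw [hg, blockProjMatrix_transpose_mulVec]
    exact funext hD
  have hHdet : IsUnit H.det := by
    rw [hHV, ← isUnit_iff_isUnit_det]
    exact (hA.transpose_mul_mul_same (blockProjMatrix_mulVec_injective P g hnz)).isUnit
  have hnormal : (Vᵀ * A * V) *ᵥ Θ = -(Vᵀ *ᵥ A *ᵥ e) := by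
    rw [← hHV, ← hDV, hΘ, mulVec_neg, mulVec_mulVec, mul_nonsing_inv _ hHdet, one_mulVec]
  rw [← blockProjMatrix_mulVec]
  exact hA.dotProduct_mulVec_le_of_normal_eq_of_mem_range
    ⟨1, hg ▸ blockProjMatrix_mulVec_one P g⟩ hnormal

theorem stmt_9_general {m nh : ℕ} (A : Matrix (Fin m) (Fin m) ℝ) (hA : A.PosDef)
    (b : Fin m → ℝ) (xstar : Fin m → ℝ) (hxstar : xstar = A⁻¹.mulVec b)
    (P : Fin m → Fin nh)
    (x : ℕ → Fin m → ℝ)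
    (g : ℕ → Fin m → ℝ) (hg : ∀ k, g k = A.mulVec (x k) - b)
    (hnz : ∀ k n, blockProj P n (g k) ≠ 0)
    (D : ℕ → Fin nh → ℝ) (hD : ∀ k n, D k n = g k ⬝ᵥ blockProj P n (g k))
    (H : ℕ → Matrix (Fin nh) (Fin nh) ℝ)
    (hH : ∀ k n m', H k n m' = blockProj P n (g k) ⬝ᵥ A.mulVec (blockProj P m' (g k)))
    (Θ : ℕ → Fin nh → ℝ) (hΘ : ∀ k, Θ k = -((H k)⁻¹.mulVec (D k)))
    (hupd : ∀ k, x (k + 1) = x k + ∑ n, Θ k n • blockProj P n (g k))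
    (K : ℝ) (hK : 1 ≤ K) :
    (∀ k : ℕ,
        (x k - xstar) ⬝ᵥ A.mulVec (x k - xstar)
          ≤ (1 - 4 * condNumber A / (K * (condNumber A + 1) ^ 2)) ^ k
              * ((x 0 - xstar) ⬝ᵥ A.mulVec (x 0 - xstar)))
      ∧ Filter.Tendsto x Filter.atTop (nhds xstar) := by
  set κ := condNumber A
  set ρ := 1 - 4 * κ / (K * (κ + 1) ^ 2)
  have hκ : 0 ≤ κ := hA.condNumber_nonneg
  have hρ₀ : 0 ≤ 1 - 4 * κ / (κ + 1) ^ 2 :=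
    sub_nonneg.2 <| (div_le_one (by positivity)).2 (by nlinarith [sq_nonneg (κ - 1)])
  have hrate : 1 - 4 * κ / (κ + 1) ^ 2 ≤ ρ :=
    sub_le_sub_left (div_le_div_of_nonneg_left (by positivity) (by positivity)
      (le_mul_of_one_le_left (by positivity) hK)) 1
  have herr : ∀ k, A *ᵥ (x k - xstar) = g k := fun k => by
    rw [hg, mulVec_sub, hxstar, mulVec_mulVec,
      mul_nonsing_inv _ ((isUnit_iff_isUnit_det A).1 hA.isUnit), one_mulVec]
  set E : ℕ → ℝ := fun k => (x k - xstar) ⬝ᵥ A *ᵥ (x k - xstar)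
  have hstep : ∀ k, E (k + 1) ≤ ρ * E k := fun k => by
    have h := blockSteepestDescent_energy_le hA P (herr k) (hnz k) (hD k) (hH k) (hΘ k)
    rw [← add_sub_right_comm, ← hupd] at h
    exact h.trans (mul_le_mul_of_nonneg_right hrate (hA.posSemidef.dotProduct_mulVec_nonneg _))
  have hbound : ∀ k, E k ≤ ρ ^ k * E 0 := by
    intro k
    induction k with
    | zero => simp
    | succ k ih => calc
        E (k + 1) ≤ ρ * E k := hstep k
        _ ≤ ρ * (ρ ^ k * E 0) := mul_le_mul_of_nonneg_left ih (hρ₀.trans hrate)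
        _ = ρ ^ (k + 1) * E 0 := by ring
  refine ⟨hbound, ?_⟩
  rcases isEmpty_or_nonempty (Fin m) with hm | hm
  · exact tendsto_const_nhds.congr fun k => Subsingleton.elim _ _
  have hρ₁ : ρ < 1 := by
    have := hA.condNumber_pos
    have : 0 < K := by linarith
    have : 0 < 4 * κ / (K * (κ + 1) ^ 2) := by positivity
    linarith
  simpa using (hA.tendsto_zero_of_le_geometric (hρ₀.trans hrate) hρ₁ hbound).add_const xstar

/-- Linear convergence of the enhanced steepest-descent iterates: if `κ(H_k) ≤ K` for all
`k`, then `‖x^k − x*‖²_A ≤ (1 − 4κ̲/(K(κ̲+1)²))^k ‖x⁰ − x*‖²_A` and `x^k → x*`. -/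
theorem stmt_9 {m nh : ℕ} (A : Matrix (Fin m) (Fin m) ℝ) (hA : A.PosDef)
    (b : Fin m → ℝ) (xstar : Fin m → ℝ) (hxstar : xstar = A⁻¹.mulVec b)
    (P : Fin m → Fin nh) (hP : Function.Surjective P)
    (x : ℕ → Fin m → ℝ)
    (g : ℕ → Fin m → ℝ) (hg : ∀ k, g k = A.mulVec (x k) - b)
    (hnz : ∀ k n, blockProj P n (g k) ≠ 0)
    (D : ℕ → Fin nh → ℝ) (hD : ∀ k n, D k n = g k ⬝ᵥ blockProj P n (g k))
    (H : ℕ → Matrix (Fin nh) (Fin nh) ℝ)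
    (hH : ∀ k n m', H k n m' = blockProj P n (g k) ⬝ᵥ A.mulVec (blockProj P m' (g k)))
    (Θ : ℕ → Fin nh → ℝ) (hΘ : ∀ k, Θ k = -((H k)⁻¹.mulVec (D k)))
    (hupd : ∀ k, x (k + 1) = x k + ∑ n, Θ k n • blockProj P n (g k))
    (K : ℝ) (hK : 1 ≤ K) (hcond : ∀ k, condNumber (H k) ≤ K) :
    (∀ k : ℕ,
        (x k - xstar) ⬝ᵥ A.mulVec (x k - xstar)
          ≤ (1 - 4 * condNumber A / (K * (condNumber A + 1) ^ 2)) ^ k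
              * ((x 0 - xstar) ⬝ᵥ A.mulVec (x 0 - xstar)))
      ∧ Filter.Tendsto x Filter.atTop (nhds xstar) :=
  stmt_9_general A hA b xstar hxstar P x g hg hnz D hD H hH Θ hΘ hupd K hK
end
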